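/- If H and J are cognate atomic hypergraphs, then H and J have exactly the same constructions. -/

import Mathlib

namespace HG

variable {α : Type*} [DecidableEq α]

/-- The carrier of a hypergraph: the union of its members. -/
def carrier (H : Finset (Finset α)) : Finset α := H.sup id

/-- A hypergraph (on its carrier) is a finite family of sets not containing `∅`. -/
def IsHypergraph (H : Finset (Finset α)) : Prop := ∅ ∉ H

/-- The restriction `H_Y = {X ∈ H ∣ X ⊆ Y}`. -/
def restrict (H : Finset (Finset α)) (Y : Finset α) : Finset (Finset α) :=
  H.filter (· ⊆ Y)

/-- `x` and `y` are joined by a path of `H`: a nonempty sequence of distinct members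
of `H`, consecutive members intersecting, the first containing `x`, the last `y`. -/
def Joined (H : Finset (Finset α)) (x y : α) : Prop :=
  ∃ (X : Finset α) (l : List (Finset α)),
    (X :: l).Nodup ∧ (∀ Z ∈ X :: l, Z ∈ H) ∧
    (X :: l).Chain' (fun A B => (A ∩ B).Nonempty) ∧
    x ∈ X ∧ y ∈ (X :: l).getLast (List.cons_ne_nil X l)

/-- Path-connectedness of a hypergraph: any two carrier elements are joined. -/
def Conn (H : Finset (Finset α)) : Prop :=
  ∀ x ∈ carrier H, ∀ y ∈ carrier H, Joined H x y

/-- `P` is a hypergraph partition of `H`: a partition of `H` whose family of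
carriers is a partition of the carrier of `H`. -/
def IsHGPartition (H : Finset (Finset α)) (P : Finset (Finset (Finset α))) : Prop :=
  (∀ Q ∈ P, Q ≠ ∅) ∧
  (∀ Q ∈ P, ∀ Q' ∈ P, Q ≠ Q' → Disjoint Q Q') ∧
  P.sup id = H ∧
  (∀ Q ∈ P, ∀ Q' ∈ P, Q ≠ Q' → Disjoint (carrier Q) (carrier Q'))

/-- A hypergraph is atomic when it contains all singletons of carrier elements. -/
def Atomic (H : Finset (Finset α)) : Prop := ∀ x ∈ carrier H, {x} ∈ H

/-- A hypergraph is saturated when intersecting members have their union in it. -/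
def Saturated (H : Finset (Finset α)) : Prop :=
  ∀ X ∈ H, ∀ Y ∈ H, (X ∩ Y).Nonempty → X ∪ Y ∈ H

/-- `Y` is dispensable in `H` when `(H_Y) \ {Y}` is a connected hypergraph on `Y`. -/
def Dispensable (H : Finset (Finset α)) (Y : Finset α) : Prop :=
  IsHypergraph ((restrict H Y).erase Y) ∧
  carrier ((restrict H Y).erase Y) = Y ∧
  Conn ((restrict H Y).erase Y)

/-- `J` enhances `H` when `J = H ∪ {Y}` for some `Y ∉ H` dispensable in `H`. -/
def Enhances (J H : Finset (Finset α)) : Prop :=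
  ∃ Y, Dispensable H Y ∧ Y ∉ H ∧ J = insert Y H

/-- Cognation: the equivalence closure of the enhancement relation. -/
def Cognate (H J : Finset (Finset α)) : Prop :=
  Relation.EqvGen Enhances H J

/-- The finest hypergraph partition: one all of whose parts are connected. -/
def FinestHGPartition (H : Finset (Finset α)) (P : Finset (Finset (Finset α))) : Prop :=
  IsHGPartition H P ∧ ∀ Q ∈ P, Conn Q

/-- Constructions of a hypergraph, defined recursively. -/
inductive IsConstruction : Finset (Finset α) → Finset (Finset α) → Prop
  | empty : IsConstruction ∅ ∅
  | conn {H K : Finset (Finset α)} {x : α} :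
      (carrier H).Nonempty → Conn H → x ∈ carrier H →
      IsConstruction (restrict H ((carrier H).erase x)) K →
      IsConstruction H (insert (carrier H) K)
  | parts {H : Finset (Finset α)} {P : Finset (Finset (Finset α))}
      {K : Finset (Finset α) → Finset (Finset α)} :
      2 ≤ (carrier H).card → ¬ Conn H → 2 ≤ P.card → FinestHGPartition H P →
      (∀ Q ∈ P, IsConstruction Q (K Q)) →
      IsConstruction H (P.sup K)

/-- An `M`-antichain: at least two members of `M`, pairwise incomparable. -/
def IsAntichainIn (M S : Finset (Finset α)) : Prop :=
  S ⊆ M ∧ 2 ≤ S.card ∧ ∀ X ∈ S, ∀ Y ∈ S, X ≠ Y → ¬ X ⊆ Y ∧ ¬ Y ⊆ X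

/-- `S` misses `H` when the union of `S` is not a member of `H`. -/
def Misses (H S : Finset (Finset α)) : Prop := S.sup id ∉ H

/-- `x` is `X`-superficial relative to `M`. -/
def Superficial (M : Finset (Finset α)) (X : Finset α) (x : α) : Prop :=
  x ∈ X ∧ ∀ Y ∈ M, Y ⊂ X → x ∉ Y

/-- ASC-hypergraph: atomic, saturated and connected hypergraph. -/
def ASC (H : Finset (Finset α)) : Prop :=
  IsHypergraph H ∧ Atomic H ∧ Saturated H ∧ Conn H

end HG

/-!
Adding a dispensable member `Y` to `H` changes neither the carrier nor the connectivity
relation of `H`: a step through `Y` can be rerouted through the connected hypergraph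
`H_Y \ {Y}` on `Y`. The members of `H_Y` therefore lie in a single component, and the finest
partition of `H ∪ {Y}` is that of `H` with `Y` added to this component. So the recursion
defining constructions runs in parallel on `H` and `H ∪ {Y}`: restrictions and components of
the two are again equal or related by adding `Y`, and induction on constructions applies.
-/

namespace HG

variable {α : Type*}

def Linked (H : Finset (Finset α)) (x y : α) : Prop := ∃ X ∈ H, x ∈ X ∧ y ∈ X

lemma transGen_linked_mono {H H' : Finset (Finset α)} (h : H ⊆ H') {x y : α}
    (hxy : Relation.TransGen (Linked H) x y) : Relation.TransGen (Linked H') x y :=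
  Relation.TransGen.mono (fun _ _ ⟨X, hX, hx, hy⟩ => ⟨X, h hX, hx, hy⟩) _ _ hxy

variable [DecidableEq α]

lemma subset_carrier {H : Finset (Finset α)} {X : Finset α} (h : X ∈ H) : X ⊆ carrier H :=
  Finset.le_sup (f := id) h

lemma carrier_mono {H H' : Finset (Finset α)} (h : H ⊆ H') : carrier H ⊆ carrier H' :=
  Finset.sup_mono h

lemma carrier_insert (Y : Finset α) (H : Finset (Finset α)) :
    carrier (insert Y H) = Y ∪ carrier H :=
  Finset.sup_insert

lemma mem_restrict {H : Finset (Finset α)} {S X : Finset α} :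
    X ∈ restrict H S ↔ X ∈ H ∧ X ⊆ S :=
  Finset.mem_filter

lemma restrict_subset (H : Finset (Finset α)) (S : Finset α) : restrict H S ⊆ H :=
  Finset.filter_subset _ _

lemma restrict_insert_of_subset {H : Finset (Finset α)} {Y S : Finset α} (h : Y ⊆ S) :
    restrict (insert Y H) S = insert Y (restrict H S) := by
  rw [restrict, Finset.filter_insert, if_pos h]; rfl

lemma restrict_insert_of_not_subset {H : Finset (Finset α)} {Y S : Finset α} (h : ¬ Y ⊆ S) :
    restrict (insert Y H) S = restrict H S := by
  rw [restrict, Finset.filter_insert, if_neg h]; rfl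

lemma restrict_restrict {H : Finset (Finset α)} {Y S : Finset α} (h : Y ⊆ S) :
    restrict (restrict H S) Y = restrict H Y := by
  ext X
  simp only [mem_restrict, and_assoc]
  exact ⟨fun ⟨hX, _, hXY⟩ => ⟨hX, hXY⟩, fun ⟨hX, hXY⟩ => ⟨hX, hXY.trans h, hXY⟩⟩

lemma restrict_eq_of_subset {H C : Finset (Finset α)} {Y : Finset α} (hCH : C ⊆ H)
    (hHC : restrict H Y ⊆ C) : restrict C Y = restrict H Y := by
  ext X
  simp only [mem_restrict]
  exact ⟨fun ⟨hX, hXY⟩ => ⟨hCH hX, hXY⟩,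
    fun ⟨hX, hXY⟩ => ⟨hHC (mem_restrict.2 ⟨hX, hXY⟩), hXY⟩⟩

/-- Paths in this graph are the duplicate-free chains in the definition of `Joined`. -/
def memberGraph (H : Finset (Finset α)) : SimpleGraph H where
  Adj A B := A ≠ B ∧ ((A : Finset α) ∩ B).Nonempty
  symm := ⟨fun _ _ h => ⟨h.1.symm, by rw [Finset.inter_comm]; exact h.2⟩⟩
  loopless := ⟨fun _ h => h.1 rfl⟩

lemma transGen_linked_of_joined {H : Finset (Finset α)} {x y : α} (h : Joined H x y) :
    Relation.TransGen (Linked H) x y := by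
  obtain ⟨X, l, -, hmem, hchain, hx, hy⟩ := h
  induction l generalizing X x with
  | nil => exact .single ⟨X, hmem X (by simp), hx, hy⟩
  | cons B l ih =>
    obtain ⟨t, ht⟩ := List.IsChain.rel hchain
    rw [Finset.mem_inter] at ht
    exact .head ⟨X, hmem X (by simp), hx, ht.1⟩
      (ih B (fun Z hZ => hmem Z (List.mem_cons_of_mem _ hZ)) hchain.tail ht.2 hy)

lemma exists_reachable_of_transGen_linked {H : Finset (Finset α)} {x y : α}
    (h : Relation.TransGen (Linked H) x y) :
    ∃ X Z : H, x ∈ (X : Finset α) ∧ y ∈ (Z : Finset α) ∧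
      (memberGraph H).Reachable X Z := by
  induction h with
  | single h =>
    obtain ⟨X, hX, hx, hy⟩ := h
    exact ⟨⟨X, hX⟩, ⟨X, hX⟩, hx, hy, .refl _⟩
  | tail _ h ih =>
    obtain ⟨W, hW, hb, hc⟩ := h
    obtain ⟨X, Z, hx, hb', hXZ⟩ := ih
    refine ⟨X, ⟨W, hW⟩, hx, hc, hXZ.trans ?_⟩
    by_cases hZW : Z = ⟨W, hW⟩
    · rw [hZW]
    · exact SimpleGraph.Adj.reachable ⟨hZW, _, Finset.mem_inter.2 ⟨hb', hb⟩⟩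

lemma joined_of_reachable {H : Finset (Finset α)} {X Z : H} {x y : α} (hx : x ∈ (X : Finset α))
    (hy : y ∈ (Z : Finset α)) (h : (memberGraph H).Reachable X Z) : Joined H x y := by
  obtain ⟨p⟩ := h
  let q := p.toPath
  have hsupp :
      (X : Finset α) :: q.1.support.tail.map Subtype.val = q.1.support.map Subtype.val := by
    conv_rhs => rw [← q.1.cons_tail_support]
    rfl
  refine ⟨X, q.1.support.tail.map Subtype.val, ?_, ?_, ?_, hx, ?_⟩
  · rw [hsupp]; exact q.2.support_nodup.map Subtype.val_injective
  · rw [hsupp]; simp only [List.mem_map]; rintro _ ⟨A, -, rfl⟩; exact A.2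
  · rw [hsupp]; exact (List.isChain_map _).2 (q.1.isChain_adj_support.imp fun _ _ h => h.2)
  · simp only [hsupp, List.getLast_map, q.1.getLast_support]; exact hy

theorem joined_iff_transGen_linked {H : Finset (Finset α)} {x y : α} :
    Joined H x y ↔ Relation.TransGen (Linked H) x y := by
  refine ⟨transGen_linked_of_joined, fun h => ?_⟩
  obtain ⟨X, Z, hx, hy, hXZ⟩ := exists_reachable_of_transGen_linked h
  exact joined_of_reachable hx hy hXZ

lemma conn_iff_transGen_linked {H : Finset (Finset α)} :
    Conn H ↔ ∀ x ∈ carrier H, ∀ y ∈ carrier H, Relation.TransGen (Linked H) x y := by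
  simp only [Conn, joined_iff_transGen_linked]

namespace Dispensable

variable {H : Finset (Finset α)} {Y : Finset α}

lemma empty_notMem (hd : Dispensable H Y) (hY : Y ∉ H) : ∅ ∉ H := fun h0 =>
  hd.1 (Finset.mem_erase.2
    ⟨fun h => hY (h ▸ h0), mem_restrict.2 ⟨h0, Finset.empty_subset Y⟩⟩)

lemma restrict_nonempty (hd : Dispensable H Y) (hY0 : Y ≠ ∅) : (restrict H Y).Nonempty := by
  rw [Finset.nonempty_iff_ne_empty]
  intro h
  have hcar := hd.2.1
  rw [h] at hcar
  exact hY0 hcar.symm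

lemma subset_carrier (hd : Dispensable H Y) : Y ⊆ carrier H := by
  conv_lhs => rw [← hd.2.1]
  exact carrier_mono ((Finset.erase_subset _ _).trans (restrict_subset H Y))

lemma carrier_insert (hd : Dispensable H Y) : carrier (insert Y H) = carrier H := by
  rw [HG.carrier_insert, Finset.union_eq_right.2 hd.subset_carrier]

lemma transGen_linked (hd : Dispensable H Y) {x y : α} (hx : x ∈ Y) (hy : y ∈ Y) :
    Relation.TransGen (Linked H) x y := by
  obtain ⟨-, hcar, hconn⟩ := hd
  rw [conn_iff_transGen_linked, hcar] at hconn
  exact transGen_linked_mono ((Finset.erase_subset _ _).trans (restrict_subset H Y))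
    (hconn x hx y hy)

/-- A step through the new member `Y` can be replaced by a path inside `H_Y`. -/
lemma transGen_linked_insert_iff (hd : Dispensable H Y) {x y : α} :
    Relation.TransGen (Linked (insert Y H)) x y ↔ Relation.TransGen (Linked H) x y := by
  refine ⟨fun h => Relation.TransGen.lift' id (fun a b hab => ?_) _ _ h,
    transGen_linked_mono (Finset.subset_insert Y H)⟩
  obtain ⟨X, hX, ha, hb⟩ := hab
  rcases Finset.mem_insert.1 hX with rfl | hX
  · exact hd.transGen_linked ha hb
  · exact .single ⟨X, hX, ha, hb⟩

lemma conn_insert_iff (hd : Dispensable H Y) : Conn (insert Y H) ↔ Conn H := by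
  simp only [conn_iff_transGen_linked, hd.carrier_insert, hd.transGen_linked_insert_iff]

lemma restrict (hd : Dispensable H Y) {S : Finset α} (h : Y ⊆ S) :
    Dispensable (HG.restrict H S) Y := by
  rwa [Dispensable, restrict_restrict h]

lemma of_restrict_eq {H' : Finset (Finset α)} (hd : Dispensable H Y)
    (h : HG.restrict H' Y = HG.restrict H Y) : Dispensable H' Y := by
  rwa [Dispensable, h]

end Dispensable

namespace IsHGPartition

variable {H : Finset (Finset α)} {P : Finset (Finset (Finset α))}

lemma subset (hP : IsHGPartition H P) {Q : Finset (Finset α)} (hQ : Q ∈ P) : Q ⊆ H :=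
  hP.2.2.1 ▸ Finset.le_sup (f := id) hQ

lemma exists_mem (hP : IsHGPartition H P) {A : Finset α} (hA : A ∈ H) : ∃ Q ∈ P, A ∈ Q :=
  Finset.mem_sup.1 (hP.2.2.1 ▸ hA)

lemma union_sup_erase (hP : IsHGPartition H P) {C : Finset (Finset α)} (hC : C ∈ P) :
    C ∪ (P.erase C).sup id = H := by
  rw [← hP.2.2.1, ← Finset.insert_erase hC, Finset.sup_insert, Finset.erase_insert_eq_erase,
    Finset.erase_idem]
  rfl

lemma notMem_erase (hP : IsHGPartition H P) {C C' : Finset (Finset α)} (hC : C ∈ P)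
    (h : ¬ Disjoint C' C) : C' ∉ P.erase C := fun hC' =>
  h (hP.2.1 C' (Finset.mem_of_mem_erase hC') C hC (Finset.ne_of_mem_erase hC'))

lemma erase_union_sup_erase (hP : IsHGPartition H P) {C : Finset (Finset α)} (hC : C ∈ P)
    {Y : Finset α} (hYC : Y ∈ C) : C.erase Y ∪ (P.erase C).sup id = H.erase Y := by
  have hY : Y ∉ (P.erase C).sup id := fun h => by
    obtain ⟨Q, hQ, hYQ⟩ := Finset.mem_sup.1 h
    exact hP.notMem_erase hC (Finset.not_disjoint_iff.2 ⟨Y, hYQ, hYC⟩) hQ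
  rw [← hP.union_sup_erase hC, Finset.erase_union_distrib, Finset.erase_eq_of_notMem hY]

lemma eq_of_mem_carrier (hP : IsHGPartition H P) {Q Q' : Finset (Finset α)} (hQ : Q ∈ P)
    (hQ' : Q' ∈ P) {x : α} (hx : x ∈ carrier Q) (hx' : x ∈ carrier Q') : Q = Q' := by
  by_contra hne
  exact Finset.disjoint_left.1 (hP.2.2.2 Q hQ Q' hQ' hne) hx hx'

lemma mem_of_mem_carrier (hP : IsHGPartition H P) {Q : Finset (Finset α)} (hQ : Q ∈ P)
    {A : Finset α} (hA : A ∈ H) {a : α} (ha : a ∈ A) (haQ : a ∈ carrier Q) : A ∈ Q := by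
  obtain ⟨Q', hQ', hAQ'⟩ := hP.exists_mem hA
  rwa [hP.eq_of_mem_carrier hQ hQ' haQ (subset_carrier hAQ' ha)]

lemma mem_carrier_of_transGen_linked (hP : IsHGPartition H P) {Q : Finset (Finset α)}
    (hQ : Q ∈ P) {x y : α} (h : Relation.TransGen (Linked H) x y) (hx : x ∈ carrier Q) :
    y ∈ carrier Q := by
  induction h with
  | single hxy =>
    obtain ⟨X, hX, hx', hy⟩ := hxy
    exact subset_carrier (hP.mem_of_mem_carrier hQ hX hx' hx) hy
  | tail _ hyz ih =>
    obtain ⟨X, hX, hy, hz⟩ := hyz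
    exact subset_carrier (hP.mem_of_mem_carrier hQ hX hy ih) hz

/-- Any two members of `H_Y` are joined inside `H`, because `Y` is connected in `H_Y`. -/
lemma restrict_subset_of_dispensable (hP : IsHGPartition H P) {C : Finset (Finset α)}
    (hC : C ∈ P) {Y : Finset α} (hd : Dispensable H Y) (hY : Y ∉ H) {A : Finset α}
    (hA : A ∈ restrict H Y) (hAC : A ∈ C) : restrict H Y ⊆ C := by
  intro B hB
  rw [mem_restrict] at hA hB
  obtain ⟨a, ha⟩ := Finset.nonempty_iff_ne_empty.2 fun h => hd.empty_notMem hY (h ▸ hA.1)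
  obtain ⟨b, hb⟩ := Finset.nonempty_iff_ne_empty.2 fun h => hd.empty_notMem hY (h ▸ hB.1)
  refine hP.mem_of_mem_carrier hC hB.1 hb ?_
  exact hP.mem_carrier_of_transGen_linked hC (hd.transGen_linked (hA.2 ha) (hB.2 hb))
    (subset_carrier hAC ha)

lemma restrict_subset_erase {Y : Finset α} (hP : IsHGPartition (insert Y H) P)
    {Q : Finset (Finset α)} (hQ : Q ∈ P) (hYQ : Y ∈ Q) (hY : Y ∉ H) (hH0 : ∅ ∉ H) :
    restrict H Y ⊆ Q.erase Y := by
  intro B hB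
  obtain ⟨hBH, hBY⟩ := mem_restrict.1 hB
  obtain ⟨b, hb⟩ := Finset.nonempty_iff_ne_empty.2 fun h => hH0 (h ▸ hBH)
  refine Finset.mem_erase.2 ⟨fun h => hY (h ▸ hBH), ?_⟩
  exact hP.mem_of_mem_carrier hQ (Finset.mem_insert_of_mem hBH) hb (subset_carrier hYQ (hBY hb))

end IsHGPartition

lemma FinestHGPartition.replace {H H' : Finset (Finset α)} {P : Finset (Finset (Finset α))}
    (hP : FinestHGPartition H P) {C C' : Finset (Finset α)} (hC : C ∈ P) (hC' : C' ≠ ∅)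
    (hcar : carrier C' ⊆ carrier C) (hconn : Conn C')
    (hdisj : ∀ Q ∈ P, Q ≠ C → Disjoint C' Q) (hH' : C' ∪ (P.erase C).sup id = H') :
    FinestHGPartition H' (insert C' (P.erase C)) := by
  obtain ⟨⟨hne, hdisjP, -, hcarP⟩, hconnP⟩ := hP
  refine ⟨⟨?_, ?_, by rw [Finset.sup_insert]; exact hH', ?_⟩, ?_⟩
  · simp only [Finset.mem_insert, Finset.mem_erase]
    rintro Q (rfl | ⟨-, hQ⟩)
    exacts [hC', hne Q hQ]
  · simp only [Finset.mem_insert, Finset.mem_erase]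
    rintro Q (rfl | ⟨hQC, hQ⟩) Q' (rfl | ⟨hQ'C, hQ'⟩) hQQ'
    exacts [absurd rfl hQQ', hdisj Q' hQ' hQ'C, (hdisj Q hQ hQC).symm, hdisjP Q hQ Q' hQ' hQQ']
  · simp only [Finset.mem_insert, Finset.mem_erase]
    rintro Q (rfl | ⟨hQC, hQ⟩) Q' (rfl | ⟨hQ'C, hQ'⟩) hQQ'
    exacts [absurd rfl hQQ', (hcarP C hC Q' hQ' (Ne.symm hQ'C)).mono_left hcar,
      ((hcarP C hC Q hQ (Ne.symm hQC)).mono_left hcar).symm, hcarP Q hQ Q' hQ' hQQ']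
  · simp only [Finset.mem_insert, Finset.mem_erase]
    rintro Q (rfl | ⟨-, hQ⟩)
    exacts [hconn, hconnP Q hQ]

lemma IsConstruction.replace_part {H' : Finset (Finset α)} {P : Finset (Finset (Finset α))}
    {C C' : Finset (Finset α)} {K : Finset (Finset α) → Finset (Finset α)}
    (hcard : 2 ≤ (carrier H').card) (hconn : ¬ Conn H') (hPc : 2 ≤ P.card) (hC : C ∈ P)
    (hC' : C' ∉ P.erase C) (hP' : FinestHGPartition H' (insert C' (P.erase C)))
    (hK : ∀ Q ∈ P, Q ≠ C → IsConstruction Q (K Q)) (hKC : IsConstruction C' (K C)) :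
    IsConstruction H' (P.sup K) := by
  have hKeq : ∀ Q ∈ P.erase C, Function.update K C' (K C) Q = K Q := fun Q hQ =>
    Function.update_of_ne (by rintro rfl; exact hC' hQ) _ _
  have hsup : (insert C' (P.erase C)).sup (Function.update K C' (K C)) = P.sup K := by
    rw [Finset.sup_insert, Function.update_self, Finset.sup_congr rfl hKeq, ← Finset.sup_insert,
      Finset.insert_erase hC]
  rw [← hsup]
  refine .parts hcard hconn ?_ hP' fun Q hQ => ?_
  · rwa [Finset.card_insert_of_notMem hC', Finset.card_erase_add_one hC]
  · rcases Finset.mem_insert.1 hQ with rfl | hQ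
    · rwa [Function.update_self]
    · rw [hKeq Q hQ]
      exact hK Q (Finset.mem_of_mem_erase hQ) (Finset.ne_of_mem_erase hQ)

lemma IsConstruction.insert_dispensable {H K : Finset (Finset α)} (hK : IsConstruction H K)
    {Y : Finset α} (hd : Dispensable H Y) (hY : Y ∉ H) (hY0 : Y ≠ ∅) :
    IsConstruction (insert Y H) K := by
  induction hK generalizing Y with
  | empty => exact absurd (Finset.subset_empty.1 hd.subset_carrier) hY0
  | @conn H K x hne hconn hx _ ih =>
    have hrestrict : IsConstruction (restrict (insert Y H) ((carrier H).erase x)) K := by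
      by_cases hYS : Y ⊆ (carrier H).erase x
      · rw [restrict_insert_of_subset hYS]
        exact ih (hd.restrict hYS) (fun h => hY (mem_restrict.1 h).1) hY0
      · rwa [restrict_insert_of_not_subset hYS]
    rw [← hd.carrier_insert] at hne hx hrestrict ⊢
    exact .conn hne (hd.conn_insert_iff.2 hconn) hx hrestrict
  | @parts H P Kf hcard hnconn hPc hP hKs ih =>
    obtain ⟨A, hA⟩ := hd.restrict_nonempty hY0
    obtain ⟨C, hC, hAC⟩ := hP.1.exists_mem (restrict_subset H Y hA)
    have hCH := hP.1.subset hC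
    have hdC : Dispensable C Y := hd.of_restrict_eq
      (restrict_eq_of_subset hCH (hP.1.restrict_subset_of_dispensable hC hd hY hA hAC))
    have hYC : Y ∉ C := fun h => hY (hCH h)
    refine .replace_part (C' := insert Y C) (by rwa [hd.carrier_insert])
      (by rwa [hd.conn_insert_iff]) hPc hC ?_ ?_ (fun Q hQ _ => hKs Q hQ) (ih C hC hdC hYC hY0)
    · exact hP.1.notMem_erase hC
        (Finset.not_disjoint_iff.2 ⟨A, Finset.mem_insert_of_mem hAC, hAC⟩)
    · refine hP.replace hC (Finset.insert_ne_empty Y C) hdC.carrier_insert.subset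
        (hdC.conn_insert_iff.2 (hP.2 C hC)) (fun Q hQ hQC => ?_) ?_
      · exact Finset.disjoint_insert_left.2
          ⟨fun h => hY (hP.1.subset hQ h), hP.1.2.1 C hC Q hQ hQC.symm⟩
      · rw [Finset.insert_union, hP.1.union_sup_erase hC]

lemma IsConstruction.of_insert_dispensable {W K : Finset (Finset α)} (hK : IsConstruction W K)
    {H : Finset (Finset α)} {Y : Finset α} (hW : W = insert Y H) (hd : Dispensable H Y)
    (hY : Y ∉ H) (hY0 : Y ≠ ∅) : IsConstruction H K := by
  induction hK generalizing H Y with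
  | empty => exact absurd hW.symm (Finset.insert_ne_empty Y H)
  | @conn W K x hne hconn hx hK ih =>
    subst hW
    rw [hd.carrier_insert] at hne hx hK ih ⊢
    refine .conn hne (hd.conn_insert_iff.1 hconn) hx ?_
    by_cases hYS : Y ⊆ (carrier H).erase x
    · exact ih (restrict_insert_of_subset hYS) (hd.restrict hYS)
        (fun h => hY (mem_restrict.1 h).1) hY0
    · rwa [restrict_insert_of_not_subset hYS] at hK
  | @parts W P Kf hcard hnconn hPc hP hKs ih =>
    subst hW
    obtain ⟨Q, hQ, hYQ⟩ := hP.1.exists_mem (Finset.mem_insert_self Y H)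
    have hHQ := hP.1.restrict_subset_erase hQ hYQ hY (hd.empty_notMem hY)
    have hdQ : Dispensable (Q.erase Y) Y := hd.of_restrict_eq
      (restrict_eq_of_subset (Finset.subset_insert_iff.1 (hP.1.subset hQ)) hHQ)
    have hQY : insert Y (Q.erase Y) = Q := Finset.insert_erase hYQ
    obtain ⟨A, hA⟩ := hd.restrict_nonempty hY0
    refine .replace_part (C' := Q.erase Y) (by rwa [← hd.carrier_insert])
      (by rwa [← hd.conn_insert_iff]) hPc hQ ?_ ?_ (fun Q hQ _ => hKs Q hQ)
      (ih Q hQ hQY.symm hdQ (Finset.notMem_erase Y Q) hY0)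
    · exact hP.1.notMem_erase hQ
        (Finset.not_disjoint_iff.2 ⟨A, hHQ hA, Finset.mem_of_mem_erase (hHQ hA)⟩)
    · refine hP.replace hQ (Finset.ne_empty_of_mem (hHQ hA))
        (carrier_mono (Finset.erase_subset Y Q))
        (hdQ.conn_insert_iff.1 (by rw [hQY]; exact hP.2 Q hQ)) (fun Q' hQ' hQ'Q => ?_) ?_
      · exact (hP.1.2.1 Q hQ Q' hQ' hQ'Q.symm).mono_left (Finset.erase_subset Y Q)
      · rw [hP.1.erase_union_sup_erase hQ hYQ, Finset.erase_insert hY]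

lemma Dispensable.isConstruction_insert_iff {H K : Finset (Finset α)} {Y : Finset α}
    (hd : Dispensable H Y) (hY : Y ∉ H) (hY0 : Y ≠ ∅) :
    IsConstruction (insert Y H) K ↔ IsConstruction H K :=
  ⟨fun hK => hK.of_insert_dispensable rfl hd hY hY0, fun hK => hK.insert_dispensable hd hY hY0⟩

/-- The enhancements witnessing cognation may pass through families containing `∅`, which
have no constructions; discarding `∅` makes every enhancement harmless. -/
lemma Enhances.isConstruction_erase_empty {J H : Finset (Finset α)} (h : Enhances J H) :
    IsConstruction (J.erase ∅) = IsConstruction (H.erase ∅) := by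
  obtain ⟨Y, hd, hY, rfl⟩ := h
  rcases eq_or_ne Y ∅ with rfl | hY0
  · rw [Finset.erase_insert_eq_erase]
  · rw [Finset.erase_insert_of_ne hY0, Finset.erase_eq_of_notMem (hd.empty_notMem hY)]
    exact funext fun K => propext (hd.isConstruction_insert_iff hY hY0)

lemma Cognate.isConstruction_erase_empty {H J : Finset (Finset α)} (hc : Cognate H J) :
    IsConstruction (H.erase ∅) = IsConstruction (J.erase ∅) := by
  induction hc with
  | rel _ _ h => exact h.isConstruction_erase_empty
  | refl => rfl
  | symm _ _ _ ih => exact ih.symm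
  | trans _ _ _ _ _ ih₁ ih₂ => exact ih₁.trans ih₂

end HG

open HG

theorem cognate_same_constructions_general
    {α : Type*} [DecidableEq α]
    (H J : Finset (Finset α)) (hH : IsHypergraph H) (hJ : IsHypergraph J)
    (hc : Cognate H J) :
    ∀ K, IsConstruction H K ↔ IsConstruction J K := by
  have key := hc.isConstruction_erase_empty
  rw [Finset.erase_eq_of_notMem hH, Finset.erase_eq_of_notMem hJ] at key
  exact fun K => by rw [key]

theorem cognate_same_constructions
    {α : Type*} [DecidableEq α]
    (H J : Finset (Finset α)) (hH : IsHypergraph H) (hJ : IsHypergraph J)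
    (hAH : Atomic H) (hAJ : Atomic J) (hc : Cognate H J) :
    ∀ K, IsConstruction H K ↔ IsConstruction J K :=
  cognate_same_constructions_general H J hH hJ hc
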